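/- arXiv:1909.02911 — 2 statements merged into one kernel-verified Lean document; each statement's English description precedes it below -/
import Mathlib

section
/- Let W and W₁ be graphons on [0,1], (Ω,μ) a probability space, and φ, ψ : Ω → [0,1] measure-preserving maps such that W(φ(x),φ(y)) = W₁(ψ(x),ψ(y)) for μ²-almost every (x,y) ∈ Ω². Then for μ-almost every x ∈ Ω, D(φ(x)) = D₁(ψ(x)), where D(x) = ∫₀¹ W(x,y) dy and D₁(x) = ∫₀¹ W₁(x,y) dy. -/
/-!
Since `φ` pushes `μ` forward to Lebesgue measure on `[0,1]`, the degree `D (φ x)` is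
`∫ W (φ x) (φ y) dμ(y)`, and likewise for `D₁ (ψ x)`. By Fubini, for almost every `x` the two
integrands agree for almost every `y`.
-/

open MeasureTheory Set

/-- A graphon on `[0,1]` (represented as a function on all of `ℝ`):
a symmetric measurable function with values in `[0,1]`. -/
def IsGraphon (W : ℝ → ℝ → ℝ) : Prop :=
  Measurable (Function.uncurry W) ∧ (∀ x y, W x y = W y x) ∧
    ∀ x y, W x y ∈ Set.Icc (0:ℝ) 1

theorem MeasureTheory.MeasurePreserving.integral_comp_of_aestronglyMeasurable {α β E : Type*}
    [MeasurableSpace α] [MeasurableSpace β] [NormedAddCommGroup E] [NormedSpace ℝ E]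
    {μ : Measure α} {ν : Measure β} {φ : α → β} (hφ : MeasurePreserving φ μ ν) {g : β → E}
    (hg : AEStronglyMeasurable g ν) :
    ∫ x, g (φ x) ∂μ = ∫ y, g y ∂ν := by
  rw [← hφ.map_eq] at hg ⊢
  exact (integral_map hφ.measurable.aemeasurable hg).symm

theorem MeasureTheory.MeasurePreserving.integral_section_comp {α β : Type*}
    [MeasurableSpace α] [MeasurableSpace β] {μ : Measure α} {ν : Measure β} {φ : α → β}
    (hφ : MeasurePreserving φ μ ν) {W : β → β → ℝ} (hW : Measurable (Function.uncurry W))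
    (a : β) :
    ∫ y, W a y ∂ν = ∫ y, W a (φ y) ∂μ :=
  (hφ.integral_comp_of_aestronglyMeasurable
    (hW.comp (measurable_const.prodMk measurable_id)).aestronglyMeasurable).symm

theorem stmt6 {Ω : Type*} [MeasurableSpace Ω] (μ : Measure Ω) [IsProbabilityMeasure μ]
    (W W₁ : ℝ → ℝ → ℝ) (hW : IsGraphon W) (hW₁ : IsGraphon W₁)
    (φ ψ : Ω → ℝ)
    (hφ : MeasurePreserving φ μ (volume.restrict (Set.Icc (0:ℝ) 1)))
    (hψ : MeasurePreserving ψ μ (volume.restrict (Set.Icc (0:ℝ) 1)))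
    (heq : ∀ᵐ p ∂(μ.prod μ), W (φ p.1) (φ p.2) = W₁ (ψ p.1) (ψ p.2)) :
    ∀ᵐ x ∂μ, (∫ y in Set.Icc (0:ℝ) 1, W (φ x) y) = ∫ y in Set.Icc (0:ℝ) 1, W₁ (ψ x) y := by
  filter_upwards [Measure.ae_ae_of_ae_prod heq] with x hx
  rw [hφ.integral_section_comp hW.1, hψ.integral_section_comp hW₁.1]
  exact integral_congr_ae hx
end

section
/- For the graphon W(x,y) = 4xy on (0,1/2)², = 1/2 when x+y > 3/2, = 0 otherwise, and for a.e. x ∈ (0,1), h(x) ∈ {0, 1/2}; in particular h(x) ≠ 1/4 for a.e. x ∈ [0,1], where h(x) = Leb{y : W(x,y) ∉ {0,1/2}}. -/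
open MeasureTheory Set

/-- The example graphon. -/
noncomputable def W (x y : ℝ) : ℝ :=
  if x ∈ Set.Ioo (0:ℝ) (1/2) ∧ y ∈ Set.Ioo (0:ℝ) (1/2) then 4 * x * y
  else if x + y > 3/2 then 1/2 else 0

/-- `h x` is the measure of the set of `y` where `W x y` is neither `0` nor `1/2`. -/
noncomputable def h (x : ℝ) : ℝ :=
  (volume {y ∈ Set.Icc (0:ℝ) 1 | W x y ∉ ({0, 1/2} : Set ℝ)}).toReal

/-! Away from the square `(0,1/2)²` the graphon only takes the values `0` and `1/2`; inside it,
`W x y = 4xy` misses both values except at the single point `y = 1/(8x)`. Hence `h x` is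
`1/2` for `x ∈ (0,1/2)` and `0` otherwise, for every `x`. -/

lemma W_of_mem_square {x y : ℝ} (hx : x ∈ Ioo (0:ℝ) (1/2)) (hy : y ∈ Ioo (0:ℝ) (1/2)) :
    W x y = 4 * x * y :=
  if_pos ⟨hx, hy⟩

lemma W_mem_of_notMem_square {x y : ℝ} (hxy : ¬(x ∈ Ioo (0:ℝ) (1/2) ∧ y ∈ Ioo (0:ℝ) (1/2))) :
    W x y ∈ ({0, 1/2} : Set ℝ) := by
  rw [W, if_neg hxy]
  split_ifs <;> simp

lemma setOf_W_notMem_eq_of_mem {x : ℝ} (hx : x ∈ Ioo (0:ℝ) (1/2)) :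
    {y ∈ Icc (0:ℝ) 1 | W x y ∉ ({0, 1/2} : Set ℝ)} = Ioo (0:ℝ) (1/2) \ {1 / (8 * x)} := by
  have hx0 : 0 < x := hx.1
  ext y
  simp only [mem_sep_iff, mem_sdiff, mem_singleton_iff]
  by_cases hy : y ∈ Ioo (0:ℝ) (1/2)
  · have hxy : 4 * x * y ≠ 0 := by have := hy.1; positivity
    have hline : 4 * x * y = 1/2 ↔ y = 1 / (8 * x) := by
      field_simp
      constructor <;> intro h <;> linarith
    have hIcc : y ∈ Icc (0:ℝ) 1 := ⟨hy.1.le, by linarith [hy.2]⟩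
    simp only [W_of_mem_square hx hy, mem_insert_iff, mem_singleton_iff, hxy, false_or, hline,
      hIcc, hy, true_and]
  · simp only [W_mem_of_notMem_square (fun h => hy h.2), not_true_eq_false, and_false, hy,
      false_and]

lemma setOf_W_notMem_eq_of_notMem {x : ℝ} (hx : x ∉ Ioo (0:ℝ) (1/2)) :
    {y ∈ Icc (0:ℝ) 1 | W x y ∉ ({0, 1/2} : Set ℝ)} = ∅ :=
  eq_empty_of_forall_notMem fun _ hy => hy.2 (W_mem_of_notMem_square fun h => hx h.1)

lemma h_of_mem {x : ℝ} (hx : x ∈ Ioo (0:ℝ) (1/2)) : h x = 1/2 := by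
  rw [h, setOf_W_notMem_eq_of_mem hx, measure_sdiff_null (measure_singleton _), Real.volume_Ioo]
  norm_num

lemma h_of_notMem {x : ℝ} (hx : x ∉ Ioo (0:ℝ) (1/2)) : h x = 0 := by
  rw [h, setOf_W_notMem_eq_of_notMem hx, measure_empty, ENNReal.toReal_zero]

lemma h_mem (x : ℝ) : h x ∈ ({0, 1/2} : Set ℝ) := by
  by_cases hx : x ∈ Ioo (0:ℝ) (1/2)
  · exact Or.inr (h_of_mem hx)
  · exact Or.inl (h_of_notMem hx)

lemma h_ne_quarter (x : ℝ) : h x ≠ 1/4 := by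
  rcases h_mem x with hx | hx <;> rw [hx] <;> norm_num

theorem stmt14 :
    (∀ᵐ x ∂(volume.restrict (Set.Ioo (0:ℝ) 1)), h x ∈ ({0, 1/2} : Set ℝ)) ∧
    (∀ᵐ x ∂(volume.restrict (Set.Icc (0:ℝ) 1)), h x ≠ 1/4) :=
  ⟨.of_forall h_mem, .of_forall h_ne_quarter⟩
end
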